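/- arXiv:2509.14541 — 7 statements merged into one kernel-verified Lean document; each statement's English description precedes it below -/
import Mathlib

section
/- Let d ≥ 1, τ ∈ (0,1) and λ ∈ (0,1]. Let L : ℝ^d × ℝ^d → ℝ be continuous, ℤ^d-periodic in its first variable and superlinear, and let f : ℝ^d → ℝ be continuous and ℤ^d-periodic. Let u be the unique ℤ^d-periodic continuous solution of the discrete discounted Lax–Oleinik equation with coupling f. Then for every x₀ ∈ ℝ^d there exists a sequence (x_{−k})_{k ≥ 0} in ℝ^d with x₀ = x₀ (the given point) such that for every k ≥ 0, u(x_{−k}) = (1−τλ) u(x_{−k−1}) + 𝓛_{τ,f}(x_{−k−1}, x_{−k}); that is, every point admits a discounted calibrated configuration. -/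
open MeasureTheory Set Filter

noncomputable section

/-- `ℝ^d` with the Euclidean norm. -/
abbrev Ed (d : ℕ) := EuclideanSpace ℝ (Fin d)

/-- The integer vector `k` viewed as an element of `ℝ^d`. -/
def intVec {d : ℕ} (k : Fin d → ℤ) : Ed d := WithLp.toLp 2 (fun i => (k i : ℝ))

/-- A function `h : ℝ^d → ℝ` is `ℤ^d`-periodic. -/
def ZPeriodic {d : ℕ} (h : Ed d → ℝ) : Prop :=
  ∀ (x : Ed d) (k : Fin d → ℤ), h (x + intVec k) = h x

/-- A Lagrangian `L : ℝ^d × ℝ^d → ℝ` is `ℤ^d`-periodic in its first variable. -/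
def ZPeriodic1 {d : ℕ} (L : Ed d → Ed d → ℝ) : Prop :=
  ∀ (x v : Ed d) (k : Fin d → ℤ), L (x + intVec k) v = L x v

/-- The discrete action `𝓛_{τ,f}(x,y) = τ (L(x,(y-x)/τ) + f(x))`. -/
def dAct {d : ℕ} (L : Ed d → Ed d → ℝ) (f : Ed d → ℝ) (τ : ℝ) (x y : Ed d) : ℝ :=
  τ * (L x (τ⁻¹ • (y - x)) + f x)

/-- `u` is a `ℤ^d`-periodic continuous solution of the discrete discounted
Lax–Oleinik equation `u(y) = inf_x ((1-τλ) u(x) + 𝓛_{τ,f}(x,y))`. -/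
def IsDLOSol {d : ℕ} (L : Ed d → Ed d → ℝ) (f : Ed d → ℝ) (τ lam : ℝ)
    (u : Ed d → ℝ) : Prop :=
  Continuous u ∧ ZPeriodic u ∧
    ∀ y : Ed d, IsGLB (Set.range fun x => (1 - τ * lam) * u x + dAct L f τ x y) (u y)

/-- `L` is superlinear in the velocity variable. -/
def Superlinear {d : ℕ} (L : Ed d → Ed d → ℝ) : Prop :=
  ∀ K : ℝ, 0 < K → ∃ C : ℝ, ∀ x v : Ed d, K * ‖v‖ + C ≤ L x v

/-! The infimum defining `u y` is attained: `u` and `f` are continuous and periodic, hence bounded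
below, so superlinearity makes `x ↦ (1 - τλ) u x + 𝓛_{τ,f}(x, y)` grow at least like `‖y - x‖`,
and a continuous coercive function has a minimum. Iterating a choice of minimizers backwards from
`x₀` gives the calibrated configuration. -/

lemma exists_norm_sub_intVec_le {d : ℕ} (x : Ed d) : ∃ k : Fin d → ℤ, ‖x - intVec k‖ ≤ √d := by
  refine ⟨fun i => ⌊x i⌋, ?_⟩
  rw [EuclideanSpace.norm_eq]
  gcongr
  calc ∑ i, ‖(x - intVec fun i => ⌊x i⌋) i‖ ^ 2 ≤ ∑ _i : Fin d, (1 : ℝ) := by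
        refine Finset.sum_le_sum fun i _ => ?_
        have hfract : (x - intVec fun i => ⌊x i⌋) i = Int.fract (x i) := by
          simp [intVec, Int.self_sub_floor]
        rw [hfract, Real.norm_of_nonneg (Int.fract_nonneg _)]
        nlinarith [Int.fract_nonneg (x i), Int.fract_lt_one (x i)]
    _ = d := by simp

lemma ZPeriodic.exists_forall_le {d : ℕ} {h : Ed d → ℝ} (hp : ZPeriodic h) (hc : Continuous h) :
    ∃ z, ∀ x, h z ≤ h x := by
  obtain ⟨z, -, hz⟩ := (isCompact_closedBall (0 : Ed d) √d).exists_isMinOn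
    ⟨0, Metric.mem_closedBall_self (Real.sqrt_nonneg d)⟩ hc.continuousOn
  refine ⟨z, fun x => ?_⟩
  obtain ⟨k, hk⟩ := exists_norm_sub_intVec_le x
  calc h z ≤ h (x - intVec k) := hz (mem_closedBall_zero_iff.2 hk)
    _ = h x := by simpa using (hp (x - intVec k) k).symm

lemma continuous_dAct_left {d : ℕ} {L : Ed d → Ed d → ℝ}
    (hLc : Continuous fun p : Ed d × Ed d => L p.1 p.2) {f : Ed d → ℝ} (hfc : Continuous f)
    (τ : ℝ) (y : Ed d) : Continuous fun x => dAct L f τ x y := by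
  unfold dAct
  fun_prop

lemma Superlinear.exists_norm_sub_add_le_dAct {d : ℕ} {L : Ed d → Ed d → ℝ}
    (hL : Superlinear L) {f : Ed d → ℝ} {m : ℝ} (hf : ∀ x, m ≤ f x) {τ : ℝ} (hτ : 0 < τ) :
    ∃ C, ∀ x y, ‖y - x‖ + C ≤ dAct L f τ x y := by
  obtain ⟨C, hC⟩ := hL 1 one_pos
  refine ⟨τ * (C + m), fun x y => ?_⟩
  have hnorm : τ * ‖τ⁻¹ • (y - x)‖ = ‖y - x‖ := by
    rw [norm_smul, Real.norm_of_nonneg (inv_nonneg.2 hτ.le), mul_inv_cancel_left₀ hτ.ne']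
  calc ‖y - x‖ + τ * (C + m) = τ * (1 * ‖τ⁻¹ • (y - x)‖ + C + m) := by rw [← hnorm]; ring
    _ ≤ dAct L f τ x y := by
      unfold dAct
      gcongr
      · exact hC x _
      · exact hf x

theorem IsDLOSol.exists_eq_add_dAct {d : ℕ} {τ lam : ℝ} (hτ : 0 < τ) (hτlam : τ * lam ≤ 1)
    {L : Ed d → Ed d → ℝ} (hLc : Continuous fun p : Ed d × Ed d => L p.1 p.2)
    (hLsl : Superlinear L) {f : Ed d → ℝ} (hfc : Continuous f) (hfper : ZPeriodic f)
    {u : Ed d → ℝ} (hu : IsDLOSol L f τ lam u) (y : Ed d) :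
    ∃ x, u y = (1 - τ * lam) * u x + dAct L f τ x y := by
  obtain ⟨huc, huper, hglb⟩ := hu
  obtain ⟨zu, hzu⟩ := huper.exists_forall_le huc
  obtain ⟨zf, hzf⟩ := hfper.exists_forall_le hfc
  obtain ⟨C, hC⟩ := hLsl.exists_norm_sub_add_le_dAct hzf hτ
  have hcoercive : Tendsto (fun x => (1 - τ * lam) * u x + dAct L f τ x y)
      (cocompact (Ed d)) atTop := by
    refine tendsto_atTop_mono (fun x => ?_) (tendsto_atTop_add_const_right _
      ((1 - τ * lam) * u zu + C - ‖y‖) tendsto_norm_cocompact_atTop)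
    have hu_ge : (1 - τ * lam) * u zu ≤ (1 - τ * lam) * u x :=
      mul_le_mul_of_nonneg_left (hzu x) (sub_nonneg.2 hτlam)
    have hnorm : ‖x‖ - ‖y‖ ≤ ‖y - x‖ := by
      rw [norm_sub_rev]; exact norm_sub_norm_le x y
    linarith [hC x y]
  obtain ⟨x, hx⟩ :=
    ((continuous_const.mul huc).add (continuous_dAct_left hLc hfc τ y)).exists_forall_le hcoercive
  exact ⟨x, (hglb y).unique (IsLeast.isGLB ⟨⟨x, rfl⟩, forall_mem_range.2 hx⟩)⟩

theorem stmt2_general (d : ℕ) (τ lam : ℝ)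
    (hτ : τ ∈ Set.Ioo (0:ℝ) 1) (hlam : lam ∈ Set.Ioc (0:ℝ) 1)
    (L : Ed d → Ed d → ℝ) (hLc : Continuous fun p : Ed d × Ed d => L p.1 p.2)
    (hLsl : Superlinear L)
    (f : Ed d → ℝ) (hfc : Continuous f) (hfper : ZPeriodic f)
    (u : Ed d → ℝ) (hu : IsDLOSol L f τ lam u) :
    ∀ x₀ : Ed d, ∃ xs : ℕ → Ed d, xs 0 = x₀ ∧
      ∀ k : ℕ, u (xs k) = (1 - τ * lam) * u (xs (k + 1)) + dAct L f τ (xs (k + 1)) (xs k) := by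
  intro x₀
  have hτlam : τ * lam ≤ 1 := by nlinarith [hτ.1, hτ.2, hlam.2]
  choose pred hpred using hu.exists_eq_add_dAct hτ.1 hτlam hLc hLsl hfc hfper
  refine ⟨fun k => pred^[k] x₀, rfl, fun k => ?_⟩
  simpa only [Function.iterate_succ_apply'] using hpred (pred^[k] x₀)

/-- Every point admits a discounted calibrated configuration for the solution of
the discrete discounted Lax–Oleinik equation. -/
theorem stmt2 (d : ℕ) (hd : 1 ≤ d) (τ lam : ℝ)
    (hτ : τ ∈ Set.Ioo (0:ℝ) 1) (hlam : lam ∈ Set.Ioc (0:ℝ) 1)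
    (L : Ed d → Ed d → ℝ) (hLc : Continuous fun p : Ed d × Ed d => L p.1 p.2)
    (hLper : ZPeriodic1 L) (hLsl : Superlinear L)
    (f : Ed d → ℝ) (hfc : Continuous f) (hfper : ZPeriodic f)
    (u : Ed d → ℝ) (hu : IsDLOSol L f τ lam u) :
    ∀ x₀ : Ed d, ∃ xs : ℕ → Ed d, xs 0 = x₀ ∧
      ∀ k : ℕ, u (xs k) = (1 - τ * lam) * u (xs (k + 1)) + dAct L f τ (xs (k + 1)) (xs k) :=
  stmt2_general d τ lam hτ hlam L hLc hLsl f hfc hfper u hu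
end
end

section
/- Let d ≥ 1, let L : ℝ^d × ℝ^d → ℝ be continuous, ℤ^d-periodic in its first variable and superlinear, and let F∞ > 0. For every κ > 0 and Ĉ > 0 there exist constants D > 0 and C̃ > 0, depending only on κ, Ĉ, L and F∞, such that for all τ ∈ (0,1), λ ∈ (0,1], every continuous ℤ^d-periodic f with ‖f‖∞ ≤ F∞, and every ℤ^d-periodic Lipschitz φ : ℝ^d → ℝ with Lipschitz constant at most κ and ‖φ‖∞ ≤ Ĉ/λ, the following hold: (a) for every y ∈ ℝ^d, every minimizer x of x ↦ (1−τλ) φ(x) + 𝓛_{τ,f}(x,y) satisfies |x − y| ≤ τD; (b) sup_y | inf_{x ∈ ℝ^d}( (1−τλ) φ(x) + 𝓛_{τ,f}(x,y) ) − φ(y) | ≤ τ C̃. -/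
/-!
Superlinearity with slope `κ + 1` makes a jump of length `|y - x|` cost at least
`(κ + 1)|y - x| - O(τ)` in action, while the `κ`-Lipschitz function `φ` can gain at most
`κ|y - x|`; comparing with the trivial path `x = y`, whose action is `O(τ)` because
`L(·, 0)` is bounded by periodicity, gives `|y - x| = O(τ)`. The same comparison bounds the
infimum from above and below by `φ(y) ± O(τ)`, the discount costing `τλ|φ| ≤ τĈ`.
-/

open MeasureTheory Set Filter

noncomputable section

namespace ZPeriodic

variable {d : ℕ} {g : Ed d → ℝ}

lemma exists_sub_intVec_mem_unitCube (x : Ed d) :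
    ∃ k : Fin d → ℤ, x - intVec k ∈ WithLp.toLp 2 '' Icc (0 : Fin d → ℝ) 1 :=
  ⟨fun i => ⌊x i⌋, fun i => Int.fract (x i),
    ⟨fun i => Int.fract_nonneg _, fun i => (Int.fract_lt_one _).le⟩, by
      ext i; simp [intVec, Int.self_sub_floor]⟩

lemma bddAbove_range (hg : Continuous g) (hper : ZPeriodic g) : BddAbove (range g) := by
  have hcube := (isCompact_Icc (a := (0 : Fin d → ℝ)) (b := 1)).image (PiLp.continuous_toLp 2 _)
  refine (hcube.image hg).bddAbove.mono ?_
  rintro _ ⟨x, rfl⟩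
  obtain ⟨k, hk⟩ := exists_sub_intVec_mem_unitCube x
  exact ⟨x - intVec k, hk, by rw [← hper _ k, sub_add_cancel]⟩

end ZPeriodic

section DiscreteAction

variable {d : ℕ} {L : Ed d → Ed d → ℝ} {f φ : Ed d → ℝ} {τ lam κ C F M : ℝ}

lemma le_dAct (hτ : 0 < τ) (hL : ∀ x v, (κ + 1) * ‖v‖ + C ≤ L x v)
    (hf : ∀ x, |f x| ≤ F) (x y : Ed d) :
    (κ + 1) * ‖y - x‖ + τ * (C - F) ≤ dAct L f τ x y := by
  have hv : τ * ‖τ⁻¹ • (y - x)‖ = ‖y - x‖ := by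
    rw [norm_smul, Real.norm_of_nonneg (inv_nonneg.2 hτ.le), mul_inv_cancel_left₀ hτ.ne']
  calc (κ + 1) * ‖y - x‖ + τ * (C - F)
      = τ * ((κ + 1) * ‖τ⁻¹ • (y - x)‖ + C - F) := by rw [← hv]; ring
    _ ≤ τ * (L x (τ⁻¹ • (y - x)) + f x) := by
        gcongr
        linarith [hL x (τ⁻¹ • (y - x)), neg_le_of_abs_le (hf x)]

lemma dAct_self_le (hτ : 0 ≤ τ) (hM : ∀ x, L x 0 ≤ M) (hf : ∀ x, |f x| ≤ F) (y : Ed d) :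
    dAct L f τ y y ≤ τ * (M + F) := by
  rw [dAct, sub_self, smul_zero]
  gcongr
  exacts [hM y, le_of_abs_le (hf y)]

lemma norm_sub_le_of_minimizer {a : ℝ} (ha₀ : 0 ≤ a) (ha₁ : a ≤ 1) (hτ : 0 < τ) (hκ : 0 ≤ κ)
    (hL : ∀ x v, (κ + 1) * ‖v‖ + C ≤ L x v) (hM : ∀ x, L x 0 ≤ M)
    (hf : ∀ x, |f x| ≤ F) (hφ : ∀ x y, |φ x - φ y| ≤ κ * ‖x - y‖) {x y : Ed d}
    (hmin : ∀ z, a * φ x + dAct L f τ x y ≤ a * φ z + dAct L f τ z y) :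
    ‖x - y‖ ≤ τ * (M + 2 * F - C) := by
  have hlip : a * (φ y - φ x) ≤ κ * ‖y - x‖ :=
    calc a * (φ y - φ x) ≤ a * (κ * ‖y - x‖) :=
          mul_le_mul_of_nonneg_left ((le_abs_self _).trans (hφ y x)) ha₀
      _ ≤ κ * ‖y - x‖ := mul_le_of_le_one_left (by positivity) ha₁
  rw [norm_sub_rev]
  linarith [hmin y, le_dAct hτ hL hf x y, dAct_self_le hτ.le hM hf y]

lemma abs_iInf_discounted_sub_le (hτ : 0 < τ) (hlam : 0 ≤ lam)
    (hL : ∀ x v, (κ + 1) * ‖v‖ + C ≤ L x v) (hM : ∀ x, L x 0 ≤ M) (hf : ∀ x, |f x| ≤ F)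
    (hφ : ∀ x y, |φ x - φ y| ≤ κ * ‖x - y‖)
    {Chat : ℝ} (hφb : ∀ x, lam * |φ x| ≤ Chat) (y : Ed d) :
    |(⨅ x, ((1 - τ * lam) * φ x + dAct L f τ x y)) - φ y|
      ≤ τ * max (Chat + M + F) (Chat + F - C) := by
  have hdiscount : ∀ x, |τ * lam * φ x| ≤ τ * Chat := fun x => by
    rw [abs_mul, abs_mul, abs_of_pos hτ, abs_of_nonneg hlam, mul_assoc]
    exact mul_le_mul_of_nonneg_left (hφb x) hτ.le
  have hlow : ∀ x, φ y - τ * (Chat + F - C) ≤ (1 - τ * lam) * φ x + dAct L f τ x y := by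
    intro x
    rw [one_sub_mul]
    linarith [le_dAct hτ hL hf x y, (le_abs_self _).trans (hφ y x), norm_nonneg (y - x),
      le_of_abs_le (hdiscount x)]
  have hup : (⨅ x, ((1 - τ * lam) * φ x + dAct L f τ x y)) ≤ φ y + τ * (Chat + M + F) :=
    (ciInf_le ⟨_, forall_mem_range.2 hlow⟩ y).trans <| by
      linarith [dAct_self_le hτ.le hM hf y, neg_le_of_abs_le (hdiscount y)]
  rw [abs_sub_le_iff]
  constructor
  · linarith [mul_le_mul_of_nonneg_left (le_max_left (Chat + M + F) (Chat + F - C)) hτ.le]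
  · linarith [le_ciInf hlow,
      mul_le_mul_of_nonneg_left (le_max_right (Chat + M + F) (Chat + F - C)) hτ.le]

end DiscreteAction

theorem stmt4_general (d : ℕ)
    (L : Ed d → Ed d → ℝ) (hLc : Continuous fun p : Ed d × Ed d => L p.1 p.2)
    (hLper : ZPeriodic1 L) (hLsl : Superlinear L)
    (Finf : ℝ) :
    ∀ κ : ℝ, 0 < κ → ∀ Chat : ℝ, 0 < Chat →
      ∃ D : ℝ, 0 < D ∧ ∃ Ct : ℝ, 0 < Ct ∧
        ∀ τ lam : ℝ, τ ∈ Set.Ioo (0:ℝ) 1 → lam ∈ Set.Ioc (0:ℝ) 1 →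
          ∀ f : Ed d → ℝ, Continuous f → ZPeriodic f → (∀ x, |f x| ≤ Finf) →
            ∀ φ : Ed d → ℝ, ZPeriodic φ →
              (∀ x y : Ed d, |φ x - φ y| ≤ κ * ‖x - y‖) →
              (∀ x : Ed d, |φ x| ≤ Chat / lam) →
              (∀ y x : Ed d,
                  (∀ z : Ed d, (1 - τ * lam) * φ x + dAct L f τ x y ≤
                    (1 - τ * lam) * φ z + dAct L f τ z y) →
                  ‖x - y‖ ≤ τ * D) ∧
              (∀ y : Ed d,
                  |(⨅ x : Ed d, ((1 - τ * lam) * φ x + dAct L f τ x y)) - φ y| ≤ τ * Ct) := by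
  intro κ hκ Chat _
  obtain ⟨C, hC⟩ := hLsl (κ + 1) (by linarith)
  obtain ⟨M, hM⟩ := ZPeriodic.bddAbove_range (hLc.comp (Continuous.prodMk_left 0))
    (fun x k => hLper x 0 k)
  refine ⟨max (M + 2 * Finf - C) 1, lt_max_of_lt_right one_pos,
    max (max (Chat + M + Finf) (Chat + Finf - C)) 1, lt_max_of_lt_right one_pos, ?_⟩
  rintro τ lam ⟨hτ0, hτ1⟩ ⟨hlam0, hlam1⟩ f - - hf φ - hφ hφb
  have hM' : ∀ x, L x 0 ≤ M := fun x => hM ⟨x, rfl⟩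
  refine ⟨fun y x hmin => ?_, fun y => ?_⟩
  · calc ‖x - y‖ ≤ τ * (M + 2 * Finf - C) :=
          norm_sub_le_of_minimizer (by nlinarith) (by nlinarith) hτ0 hκ.le hC hM' hf hφ hmin
      _ ≤ τ * max (M + 2 * Finf - C) 1 :=
          mul_le_mul_of_nonneg_left (le_max_left _ _) hτ0.le
  · calc _ ≤ τ * max (Chat + M + Finf) (Chat + Finf - C) :=
          abs_iInf_discounted_sub_le hτ0 hlam0.le hC hM' hf hφ
            (fun x => (le_div_iff₀' hlam0).1 (hφb x)) y
      _ ≤ τ * max (max (Chat + M + Finf) (Chat + Finf - C)) 1 :=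
          mul_le_mul_of_nonneg_left (le_max_left _ _) hτ0.le

/-- Minimizers in the discrete discounted Lax–Oleinik operator applied to an
equi-Lipschitz, `O(1/λ)`-bounded periodic function stay `τD`-close, and the
operator moves such a function by at most `τ C̃`. -/
theorem stmt4 (d : ℕ) (hd : 1 ≤ d)
    (L : Ed d → Ed d → ℝ) (hLc : Continuous fun p : Ed d × Ed d => L p.1 p.2)
    (hLper : ZPeriodic1 L) (hLsl : Superlinear L)
    (Finf : ℝ) (hFinf : 0 < Finf) :
    ∀ κ : ℝ, 0 < κ → ∀ Chat : ℝ, 0 < Chat →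
      ∃ D : ℝ, 0 < D ∧ ∃ Ct : ℝ, 0 < Ct ∧
        ∀ τ lam : ℝ, τ ∈ Set.Ioo (0:ℝ) 1 → lam ∈ Set.Ioc (0:ℝ) 1 →
          ∀ f : Ed d → ℝ, Continuous f → ZPeriodic f → (∀ x, |f x| ≤ Finf) →
            ∀ φ : Ed d → ℝ, ZPeriodic φ →
              (∀ x y : Ed d, |φ x - φ y| ≤ κ * ‖x - y‖) →
              (∀ x : Ed d, |φ x| ≤ Chat / lam) →
              (∀ y x : Ed d,
                  (∀ z : Ed d, (1 - τ * lam) * φ x + dAct L f τ x y ≤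
                    (1 - τ * lam) * φ z + dAct L f τ z y) →
                  ‖x - y‖ ≤ τ * D) ∧
              (∀ y : Ed d,
                  |(⨅ x : Ed d, ((1 - τ * lam) * φ x + dAct L f τ x y)) - φ y| ≤ τ * Ct) :=
  stmt4_general d L hLc hLper hLsl Finf
end
end

section
/- Let d ≥ 1, τ ∈ (0,1), λ ∈ (0,1]. Let L : ℝ^d × ℝ^d → ℝ be continuous, ℤ^d-periodic in its first variable and bounded below, let f : ℝ^d → ℝ be continuous and ℤ^d-periodic, and let u be the unique ℤ^d-periodic continuous solution of the discrete discounted Lax–Oleinik equation with coupling f (L, f, u are regarded as functions on 𝕋^d by periodicity). Let μ be a τ-holonomic Borel probability measure on 𝕋^d × ℝ^d such that (x,v) ↦ L(x,v) + f(x) is μ-integrable. Then ∫_{𝕋^d × ℝ^d} ( L(x,v) + f(x) − λ u(x) ) dμ(x,v) ≥ 0. -/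
open MeasureTheory Set Filter

noncomputable section

/-- The flat torus `𝕋^d = ℝ^d/ℤ^d`. -/
abbrev Td (d : ℕ) := Fin d → AddCircle (1 : ℝ)

/-- The canonical projection `Π : ℝ^d → 𝕋^d`. -/
def projT {d : ℕ} (x : Ed d) : Td d := fun i => (x i : AddCircle (1:ℝ))

/-- A Borel probability measure `μ` on `𝕋^d × ℝ^d` is `τ`-holonomic if
`∫ φ(x + Π(τv)) dμ = ∫ φ(x) dμ` for every continuous `φ : 𝕋^d → ℝ`. -/
def Holonomic {d : ℕ} (τ : ℝ) (μ : Measure (Td d × Ed d)) : Prop :=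
  ∀ φ : Td d → ℝ, Continuous φ →
    ∫ p, φ (p.1 + projT (τ • p.2)) ∂μ = ∫ p, φ p.1 ∂μ

/-
The discounted equation makes `u` a subsolution along every single step:
`u(x + τv) ≤ (1 - τλ) u(x) + τ (L(x,v) + f(x))`, i.e. `(u(x + τv) - u(x)) / τ` is bounded by
the integrand `L + f - λu`. Since `u` is continuous on the torus, holonomy says exactly that
the left-hand side has zero mean under `μ`.
-/

theorem integrable_comp_of_compactSpace {X Y : Type*} [TopologicalSpace X] [CompactSpace X]
    [TopologicalSpace Y] [MeasurableSpace Y] [OpensMeasurableSpace Y] {μ : Measure Y}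
    [IsFiniteMeasure μ] {g : X → ℝ} (hg : Continuous g) {φ : Y → X} (hφ : Continuous φ) :
    Integrable (g ∘ φ) μ := by
  obtain ⟨C, hC⟩ := isCompact_univ.exists_bound_of_continuousOn hg.norm.continuousOn
  exact Integrable.of_bound (hg.comp hφ).aestronglyMeasurable C
    (ae_of_all _ fun y => by simpa using hC (φ y) (mem_univ _))

theorem projT_isOpenQuotientMap {d : ℕ} : IsOpenQuotientMap (projT (d := d)) :=
  (IsOpenQuotientMap.piMap fun _ => QuotientAddGroup.isOpenQuotientMap_mk).comp
    (EuclideanSpace.equiv (Fin d) ℝ).toHomeomorph.isOpenQuotientMap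

theorem projT_add {d : ℕ} (x y : Ed d) : projT (x + y) = projT x + projT y := rfl

theorem continuous_of_comp_projT {d : ℕ} {w : Td d → ℝ} (hw : Continuous (w ∘ projT)) :
    Continuous w :=
  projT_isOpenQuotientMap.continuous_comp_iff.mp hw

theorem Holonomic.integral_nonneg_of_sub_le {d : ℕ} {τ : ℝ} (hτ : 0 < τ)
    {μ : Measure (Td d × Ed d)} [IsFiniteMeasure μ] (hμ : Holonomic τ μ)
    {w : Td d → ℝ} (hw : Continuous w) {g : Td d × Ed d → ℝ} (hg : Integrable g μ)
    (hwg : ∀ p, w (p.1 + projT (τ • p.2)) - w p.1 ≤ τ * g p) :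
    0 ≤ ∫ p, g p ∂μ := by
  have hshift : Continuous fun p : Td d × Ed d => p.1 + projT (τ • p.2) :=
    continuous_fst.add (projT_isOpenQuotientMap.continuous.comp (continuous_snd.const_smul τ))
  have hw_shift : Integrable (fun p => w (p.1 + projT (τ • p.2))) μ :=
    integrable_comp_of_compactSpace hw hshift
  have hw_fst : Integrable (fun p : Td d × Ed d => w p.1) μ :=
    integrable_comp_of_compactSpace hw continuous_fst
  have h_mean_zero : ∫ p, (w (p.1 + projT (τ • p.2)) - w p.1) ∂μ = 0 := by
    rw [integral_sub hw_shift hw_fst, hμ w hw, sub_self]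
  have : 0 ≤ τ * ∫ p, g p ∂μ := by
    rw [← integral_const_mul, ← h_mean_zero]
    exact integral_mono (hw_shift.sub hw_fst) (hg.const_mul τ) hwg
  exact nonneg_of_mul_nonneg_right (by linarith) hτ

theorem IsDLOSol.le_add_dAct {d : ℕ} {L : Ed d → Ed d → ℝ} {f : Ed d → ℝ} {τ lam : ℝ}
    {u : Ed d → ℝ} (hu : IsDLOSol L f τ lam u) (hτ : τ ≠ 0) (x v : Ed d) :
    u (x + τ • v) ≤ (1 - τ * lam) * u x + τ * (L x v + f x) := by
  have h := (hu.2.2 (x + τ • v)).1 (mem_range_self x)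
  rwa [dAct, add_sub_cancel_left, inv_smul_smul₀ hτ] at h

theorem stmt5_general (d : ℕ) (τ lam : ℝ)
    (hτ : τ ∈ Set.Ioo (0:ℝ) 1)
    (L : Ed d → Ed d → ℝ)
    (f : Ed d → ℝ)
    (u : Ed d → ℝ) (hu : IsDLOSol L f τ lam u)
    (Lb : Td d → Ed d → ℝ) (fb ub : Td d → ℝ)
    (hLb : ∀ (x v : Ed d), Lb (projT x) v = L x v)
    (hfb : ∀ x : Ed d, fb (projT x) = f x)
    (hub : ∀ x : Ed d, ub (projT x) = u x)
    (μ : Measure (Td d × Ed d)) (hμ : IsProbabilityMeasure μ)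
    (hhol : Holonomic τ μ)
    (hint : Integrable (fun p : Td d × Ed d => Lb p.1 p.2 + fb p.1) μ) :
    0 ≤ ∫ p, (Lb p.1 p.2 + fb p.1 - lam * ub p.1) ∂μ := by
  have hubc : Continuous ub := continuous_of_comp_projT ((funext hub : ub ∘ projT = u) ▸ hu.1)
  have hub_int : Integrable (fun p : Td d × Ed d => ub p.1) μ :=
    integrable_comp_of_compactSpace hubc continuous_fst
  refine hhol.integral_nonneg_of_sub_le hτ.1 hubc (hint.sub (hub_int.const_mul lam)) ?_
  rintro ⟨t, v⟩
  obtain ⟨x, rfl⟩ := projT_isOpenQuotientMap.surjective t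
  rw [← projT_add, hub, hub, hLb, hfb]
  linarith [hu.le_add_dAct hτ.1.ne' x v]

/-- For any `τ`-holonomic probability measure `μ`, the discounted action
functional `∫ (L + f - λu) dμ` is nonnegative. -/
theorem stmt5 (d : ℕ) (hd : 1 ≤ d) (τ lam : ℝ)
    (hτ : τ ∈ Set.Ioo (0:ℝ) 1) (hlam : lam ∈ Set.Ioc (0:ℝ) 1)
    (L : Ed d → Ed d → ℝ) (hLc : Continuous fun p : Ed d × Ed d => L p.1 p.2)
    (hLper : ZPeriodic1 L) (hLbd : ∃ c : ℝ, ∀ x v : Ed d, c ≤ L x v)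
    (f : Ed d → ℝ) (hfc : Continuous f) (hfper : ZPeriodic f)
    (u : Ed d → ℝ) (hu : IsDLOSol L f τ lam u)
    (Lb : Td d → Ed d → ℝ) (fb ub : Td d → ℝ)
    (hLb : ∀ (x v : Ed d), Lb (projT x) v = L x v)
    (hfb : ∀ x : Ed d, fb (projT x) = f x)
    (hub : ∀ x : Ed d, ub (projT x) = u x)
    (μ : Measure (Td d × Ed d)) (hμ : IsProbabilityMeasure μ)
    (hhol : Holonomic τ μ)
    (hint : Integrable (fun p : Td d × Ed d => Lb p.1 p.2 + fb p.1) μ) :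
    0 ≤ ∫ p, (Lb p.1 p.2 + fb p.1 - lam * ub p.1) ∂μ :=
  stmt5_general d τ lam hτ L f u hu Lb fb ub hLb hfb hub μ hμ hhol hint
end
end

section
/- Let d ≥ 1, let L : ℝ^d × ℝ^d → ℝ be continuous, ℤ^d-periodic in its first variable and superlinear, and let F∞, C, C₀ > 0. Then there exists R > 0, depending only on L, F∞, C and C₀, with the following property: for all τ ∈ (0,1), λ ∈ (0,1], every continuous ℤ^d-periodic f with ‖f‖∞ ≤ F∞, and every ℤ^d-periodic function u : ℝ^d → ℝ that is Lipschitz with constant at most C and satisfies λ‖u‖∞ ≤ C₀, any pair (x,v) ∈ ℝ^d × ℝ^d satisfying τ ( L(x,v) + f(x) ) = u(x + τv) − (1−τλ) u(x) has |v| ≤ R. -/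
open MeasureTheory Set Filter

noncomputable section

section CalibratedVelocity

variable {E : Type*} [SeminormedAddCommGroup E] [NormedSpace ℝ E]

theorem sub_le_mul_norm_of_abs_sub_le {u : E → ℝ} {C τ : ℝ}
    (hu : ∀ a b : E, |u a - u b| ≤ C * ‖a - b‖) (hτ : 0 ≤ τ) (x v : E) :
    u (x + τ • v) - u x ≤ τ * (C * ‖v‖) := by
  calc u (x + τ • v) - u x ≤ C * ‖x + τ • v - x‖ := (abs_le.mp (hu _ _)).2
    _ = τ * (C * ‖v‖) := by
      rw [add_sub_cancel_left, norm_smul, Real.norm_of_nonneg hτ]; ring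

/-- Slope `C + 1` in the lower bound of `L` beats the `C`-Lipschitz growth of `u`; the excess
slope `1` leaves `‖v‖` bounded by the constants alone, uniformly in `τ` and `λ`. -/
theorem norm_le_of_calibrated {L : E → E → ℝ} {f u : E → ℝ} {C C0 Finf K τ lam : ℝ} {x v : E}
    (hτ : 0 < τ) (hL : (C + 1) * ‖v‖ + K ≤ L x v) (hf : -Finf ≤ f x)
    (hu : ∀ a b : E, |u a - u b| ≤ C * ‖a - b‖) (hux : lam * u x ≤ C0)
    (hcal : τ * (L x v + f x) = u (x + τ • v) - (1 - τ * lam) * u x) :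
    ‖v‖ ≤ C0 + Finf - K := by
  have hlower : τ * ((C + 1) * ‖v‖ + K - Finf) ≤ τ * (L x v + f x) :=
    mul_le_mul_of_nonneg_left (by linarith) hτ.le
  have hupper : τ * (L x v + f x) ≤ τ * (C * ‖v‖ + C0) := by
    have hincr := sub_le_mul_norm_of_abs_sub_le hu hτ.le x v
    have hdisc : τ * (lam * u x) ≤ τ * C0 := mul_le_mul_of_nonneg_left hux hτ.le
    rw [hcal]
    linarith
  have := le_of_mul_le_mul_left (hlower.trans hupper) hτ
  linarith

end CalibratedVelocity

theorem stmt7_general (d : ℕ) (L : Ed d → Ed d → ℝ) (hLsl : Superlinear L)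
    (Finf C C0 : ℝ) (hC : 0 < C) :
    ∃ R : ℝ, 0 < R ∧
      ∀ τ lam : ℝ, τ ∈ Set.Ioo (0:ℝ) 1 → lam ∈ Set.Ioc (0:ℝ) 1 →
        ∀ f : Ed d → ℝ, Continuous f → ZPeriodic f → (∀ x, |f x| ≤ Finf) →
          ∀ u : Ed d → ℝ, ZPeriodic u →
            (∀ a b : Ed d, |u a - u b| ≤ C * ‖a - b‖) →
            (∀ x : Ed d, lam * |u x| ≤ C0) →
            ∀ x v : Ed d,
              τ * (L x v + f x) = u (x + τ • v) - (1 - τ * lam) * u x → ‖v‖ ≤ R := by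
  obtain ⟨K, hK⟩ := hLsl (C + 1) (by linarith)
  refine ⟨max 1 (C0 + Finf - K), one_pos.trans_le (le_max_left _ _), ?_⟩
  intro τ lam hτ hlam f _ _ hf u _ hu hub x v hcal
  have hux : lam * u x ≤ C0 :=
    (mul_le_mul_of_nonneg_left (le_abs_self _) hlam.1.le).trans (hub x)
  exact (norm_le_of_calibrated hτ.1 (hK x v) (abs_le.mp (hf x)).1 hu hux hcal).trans
    (le_max_right _ _)

/-- Uniform bound on the velocities of calibrated pairs: any `(x,v)` satisfying
`τ(L(x,v)+f(x)) = u(x+τv) - (1-τλ)u(x)` with `u` periodic, `C`-Lipschitz and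
`λ‖u‖∞ ≤ C₀` has `|v| ≤ R`, with `R` depending only on `L, F∞, C, C₀`. -/
theorem stmt7 (d : ℕ) (hd : 1 ≤ d)
    (L : Ed d → Ed d → ℝ) (hLc : Continuous fun p : Ed d × Ed d => L p.1 p.2)
    (hLper : ZPeriodic1 L) (hLsl : Superlinear L)
    (Finf C C0 : ℝ) (hFinf : 0 < Finf) (hC : 0 < C) (hC0 : 0 < C0) :
    ∃ R : ℝ, 0 < R ∧
      ∀ τ lam : ℝ, τ ∈ Set.Ioo (0:ℝ) 1 → lam ∈ Set.Ioc (0:ℝ) 1 →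
        ∀ f : Ed d → ℝ, Continuous f → ZPeriodic f → (∀ x, |f x| ≤ Finf) →
          ∀ u : Ed d → ℝ, ZPeriodic u →
            (∀ a b : Ed d, |u a - u b| ≤ C * ‖a - b‖) →
            (∀ x : Ed d, lam * |u x| ≤ C0) →
            ∀ x v : Ed d,
              τ * (L x v + f x) = u (x + τ • v) - (1 - τ * lam) * u x → ‖v‖ ≤ R :=
  stmt7_general d L hLsl Finf C C0 hC
end
end

section
/- Let d ≥ 1, τ ∈ (0,1), λ ∈ (0,1]. Let L : ℝ^d × ℝ^d → ℝ be continuous, ℤ^d-periodic in its first variable and superlinear, and let f : ℝ^d → ℝ be continuous and ℤ^d-periodic. Let u be the unique ℤ^d-periodic continuous solution of the λ-discounted discrete Lax–Oleinik equation u(y) = inf_{x∈ℝ^d}((1−τλ)u(x) + 𝓛_{τ,f}(x,y)), and suppose v : ℝ^d → ℝ is ℤ^d-periodic continuous and c̄ ∈ ℝ satisfy the ergodic discrete Lax–Oleinik equation v(y) + τ c̄ = inf_{x∈ℝ^d}( v(x) + 𝓛_{τ,f}(x,y) ) for all y ∈ ℝ^d. Then ‖u − c̄/λ − v‖∞ ≤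 ‖v‖∞; in particular ‖u − c̄/λ‖∞ ≤ 2‖v‖∞. -/
open MeasureTheory Set Filter

noncomputable section

/-!
Put `w := u - c/λ`. Since `(1 - τλ) c/λ = c/λ - τc`, the discounted equation says
`w(y) + τc = inf_x ((1 - τλ) w(x) + 𝓛(x,y))`, while `v(y) + τc = inf_x (v(x) + 𝓛(x,y))`.
Two infima of functions differing by at most `M` differ by at most `M`, so
`w - v ≤ sup_x ((1 - τλ)(w - v)(x) - τλ v(x)) ≤ (1 - τλ) sup (w - v) + τλ ‖v‖∞`,
which forces `sup (w - v) ≤ ‖v‖∞`; symmetrically `inf (w - v) ≥ -‖v‖∞`.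
The suprema are finite because continuous `ℤ^d`-periodic functions are bounded.
-/

def unitCube (d : ℕ) : Set (Ed d) :=
  WithLp.toLp 2 '' Set.univ.pi fun _ => Set.Icc (0 : ℝ) 1

lemma isCompact_unitCube (d : ℕ) : IsCompact (unitCube d) :=
  (isCompact_univ_pi fun _ => isCompact_Icc).image (PiLp.continuous_toLp 2 _)

lemma exists_mem_unitCube_add_intVec {d : ℕ} (x : Ed d) :
    ∃ y ∈ unitCube d, ∃ k : Fin d → ℤ, x = y + intVec k := by
  refine ⟨WithLp.toLp 2 fun i => Int.fract (x i),
    ⟨_, fun i _ => ⟨Int.fract_nonneg _, (Int.fract_lt_one _).le⟩, rfl⟩,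
    fun i => ⌊x i⌋, ?_⟩
  ext i
  exact (Int.fract_add_floor (x i)).symm

lemma ZPeriodic.range_eq_image_unitCube {d : ℕ} {h : Ed d → ℝ} (hp : ZPeriodic h) :
    Set.range h = h '' unitCube d := by
  refine Set.Subset.antisymm ?_ (Set.image_subset_range _ _)
  rintro - ⟨x, rfl⟩
  obtain ⟨y, hy, k, rfl⟩ := exists_mem_unitCube_add_intVec x
  exact ⟨y, hy, (hp y k).symm⟩

lemma ZPeriodic.isBounded_range {d : ℕ} {h : Ed d → ℝ} (hp : ZPeriodic h)
    (hc : Continuous h) : Bornology.IsBounded (Set.range h) := by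
  rw [hp.range_eq_image_unitCube]
  exact ((isCompact_unitCube d).image hc).isBounded

lemma le_add_of_mem_lowerBounds_of_isGLB {ι : Type*} {F G A : ι → ℝ} {a b M : ℝ}
    (ha : a ∈ lowerBounds (Set.range fun i => F i + A i))
    (hb : IsGLB (Set.range fun i => G i + A i) b) (hFG : ∀ i, F i ≤ G i + M) :
    a ≤ b + M := by
  have : a - M ≤ b := hb.2 <| by
    rintro - ⟨i, rfl⟩
    linarith [ha ⟨i, rfl⟩, hFG i]
  linarith

section DiscountedVsErgodic

variable {X : Type*} {A : X → X → ℝ} {u v : X → ℝ} {ε e V : ℝ}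

lemma sub_div_sub_le_of_isGLB (hε0 : 0 < ε) (hε1 : ε ≤ 1)
    (hu : ∀ y, IsGLB (Set.range fun x => (1 - ε) * u x + A x y) (u y))
    (hv : ∀ y, IsGLB (Set.range fun x => v x + A x y) (v y + e))
    (hbdd : BddAbove (Set.range fun x => u x - e / ε - v x)) (hV : ∀ x, |v x| ≤ V)
    (y : X) : u y - e / ε - v y ≤ V := by
  have : Nonempty X := ⟨y⟩
  set S := ⨆ x, (u x - e / ε - v x)
  have hdiscount : (1 - ε) * (e / ε) = e / ε - e := by field_simp
  have hstep : ∀ y, u y - e / ε - v y ≤ (1 - ε) * S + ε * V := by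
    intro y
    have := le_add_of_mem_lowerBounds_of_isGLB (M := (1 - ε) * S + ε * V + (e / ε - e))
      (hu y).1 (hv y) fun x => by
        have hS := mul_le_mul_of_nonneg_left (le_ciSup hbdd x) (sub_nonneg.2 hε1)
        have hv' := mul_le_mul_of_nonneg_left (neg_le_abs (v x) |>.trans (hV x)) hε0.le
        linarith
    linarith
  have hSV : S ≤ V := le_of_mul_le_mul_left (by linarith [ciSup_le hstep]) hε0
  exact (le_ciSup hbdd y).trans hSV

lemma neg_le_sub_div_sub_of_isGLB (hε0 : 0 < ε) (hε1 : ε ≤ 1)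
    (hu : ∀ y, IsGLB (Set.range fun x => (1 - ε) * u x + A x y) (u y))
    (hv : ∀ y, IsGLB (Set.range fun x => v x + A x y) (v y + e))
    (hbdd : BddBelow (Set.range fun x => u x - e / ε - v x)) (hV : ∀ x, |v x| ≤ V)
    (y : X) : -V ≤ u y - e / ε - v y := by
  have : Nonempty X := ⟨y⟩
  set J := ⨅ x, (u x - e / ε - v x)
  have hdiscount : (1 - ε) * (e / ε) = e / ε - e := by field_simp
  have hstep : ∀ y, (1 - ε) * J - ε * V ≤ u y - e / ε - v y := by
    intro y
    have := le_add_of_mem_lowerBounds_of_isGLB (M := ε * V - (1 - ε) * J - (e / ε - e))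
      (hv y).1 (hu y) fun x => by
        have hJ := mul_le_mul_of_nonneg_left (ciInf_le hbdd x) (sub_nonneg.2 hε1)
        have hv' := mul_le_mul_of_nonneg_left (le_abs_self (v x) |>.trans (hV x)) hε0.le
        linarith
    linarith
  have hJV : -V ≤ J := le_of_mul_le_mul_left (by linarith [le_ciInf hstep]) hε0
  exact hJV.trans (ciInf_le hbdd y)

lemma abs_sub_div_sub_le_of_isGLB (hε0 : 0 < ε) (hε1 : ε ≤ 1)
    (hu : ∀ y, IsGLB (Set.range fun x => (1 - ε) * u x + A x y) (u y))
    (hv : ∀ y, IsGLB (Set.range fun x => v x + A x y) (v y + e))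
    (hbdd : Bornology.IsBounded (Set.range fun x => u x - e / ε - v x))
    (hV : ∀ x, |v x| ≤ V) (y : X) : |u y - e / ε - v y| ≤ V :=
  abs_le.2 ⟨neg_le_sub_div_sub_of_isGLB hε0 hε1 hu hv hbdd.bddBelow hV y,
    sub_div_sub_le_of_isGLB hε0 hε1 hu hv hbdd.bddAbove hV y⟩

end DiscountedVsErgodic

theorem stmt14_general (d : ℕ) (τ lam : ℝ)
    (hτ : τ ∈ Set.Ioo (0:ℝ) 1) (hlam : lam ∈ Set.Ioc (0:ℝ) 1)
    (L : Ed d → Ed d → ℝ)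
    (f : Ed d → ℝ)
    (u : Ed d → ℝ) (hu : IsDLOSol L f τ lam u)
    (v : Ed d → ℝ) (hvc : Continuous v) (hvper : ZPeriodic v) (c : ℝ)
    (hv : ∀ y : Ed d,
      IsGLB (Set.range fun x => v x + dAct L f τ x y) (v y + τ * c)) :
    (∀ x : Ed d, |u x - c / lam - v x| ≤ ⨆ y : Ed d, |v y|) ∧
      (∀ x : Ed d, |u x - c / lam| ≤ 2 * ⨆ y : Ed d, |v y|) := by
  obtain ⟨huc, hup, hueq⟩ := hu
  have hshift : τ * c / (τ * lam) = c / lam := mul_div_mul_left c lam hτ.1.ne'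
  have hV : ∀ x, |v x| ≤ ⨆ y, |v y| := le_ciSup <|
    (ZPeriodic.isBounded_range (fun x k => by simp only [hvper x k]) hvc.abs).bddAbove
  have hφ : Bornology.IsBounded (Set.range fun x => u x - τ * c / (τ * lam) - v x) :=
    ZPeriodic.isBounded_range (fun x k => by simp only [hup x k, hvper x k])
      ((huc.sub continuous_const).sub hvc)
  have hmain := abs_sub_div_sub_le_of_isGLB (mul_pos hτ.1 hlam.1)
    (mul_le_one₀ hτ.2.le hlam.1.le hlam.2) hueq hv hφ hV
  simp only [hshift] at hmain
  refine ⟨hmain, fun x => ?_⟩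
  calc |u x - c / lam| = |(u x - c / lam - v x) + v x| := by rw [sub_add_cancel]
    _ ≤ |u x - c / lam - v x| + |v x| := abs_add_le _ _
    _ ≤ 2 * ⨆ y, |v y| := by linarith [hmain x, hV x]

/-- Comparison between the discounted and the ergodic discrete Lax–Oleinik
solutions: `‖u - c̄/λ - v‖∞ ≤ ‖v‖∞`, hence `‖u - c̄/λ‖∞ ≤ 2‖v‖∞`. -/
theorem stmt14 (d : ℕ) (hd : 1 ≤ d) (τ lam : ℝ)
    (hτ : τ ∈ Set.Ioo (0:ℝ) 1) (hlam : lam ∈ Set.Ioc (0:ℝ) 1)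
    (L : Ed d → Ed d → ℝ) (hLc : Continuous fun p : Ed d × Ed d => L p.1 p.2)
    (hLper : ZPeriodic1 L) (hLsl : Superlinear L)
    (f : Ed d → ℝ) (hfc : Continuous f) (hfper : ZPeriodic f)
    (u : Ed d → ℝ) (hu : IsDLOSol L f τ lam u)
    (v : Ed d → ℝ) (hvc : Continuous v) (hvper : ZPeriodic v) (c : ℝ)
    (hv : ∀ y : Ed d,
      IsGLB (Set.range fun x => v x + dAct L f τ x y) (v y + τ * c)) :
    (∀ x : Ed d, |u x - c / lam - v x| ≤ ⨆ y : Ed d, |v y|) ∧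
      (∀ x : Ed d, |u x - c / lam| ≤ 2 * ⨆ y : Ed d, |v y|) :=
  stmt14_general d τ lam hτ hlam L f u hu v hvc hvper c hv
end
end

section
/- Let d ≥ 1 and λ > 0. Let H : ℝ^d × ℝ^d → ℝ be continuous and ℤ^d-periodic in its first variable, and define L(x,v) := sup_{p ∈ ℝ^d} ( ⟨p,v⟩ − H(x,p) ), assumed finite for all (x,v). Let u : ℝ^d → ℝ be ℤ^d-periodic continuous, and suppose that for every ε > 0 there exists a C^∞ ℤ^d-periodic function u_ε : ℝ^d → ℝ with ‖u − u_ε‖∞ ≤ ε and λ u(x) + H(x, Du_ε(x)) ≤ ε for all x ∈ ℝ^d. Let μ be a closed Borel probability measure on 𝕋^d × ℝ^d such that L is μ-integrable (L, u regarded on 𝕋^d by periodicity). Then ∫_{𝕋^d × ℝ^d} ( L(x,v) − λ u(x) ) dμ(x,v) ≥ 0. -/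
open MeasureTheory Set Filter

noncomputable section

/-- A Borel probability measure `μ` on `𝕋^d × ℝ^d` is a closed measure:
`∫ |v| dμ < ∞` and `∫ ⟨v, Dφ(x)⟩ dμ = 0` for every `ℤ^d`-periodic `C¹`
function `φ` on `ℝ^d` (whose differential descends to `𝕋^d` as `G`). -/
def ClosedMeasure {d : ℕ} (μ : Measure (Td d × Ed d)) : Prop :=
  Integrable (fun p : Td d × Ed d => ‖p.2‖) μ ∧
    ∀ φ : Ed d → ℝ, ContDiff ℝ 1 φ → ZPeriodic φ →
      ∀ G : Td d → (Ed d →L[ℝ] ℝ), (∀ x : Ed d, G (projT x) = fderiv ℝ φ x) →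
        ∫ p, G p.1 p.2 ∂μ = 0

/-- The real inner product on `ℝ^d`. -/
def rinner {d : ℕ} (x y : Ed d) : ℝ := inner ℝ x y

/-! For a smooth periodic `ε`-subsolution `uε`, the Fenchel inequality
`Duε(x) v ≤ L(x,v) + H(x, ∇uε(x))` and `λ u + H(x, ∇uε) ≤ ε` give the pointwise minorant
`Duε(x) v - ε ≤ L(x,v) - λ u(x)`. Since `Duε` is periodic it descends to a continuous, hence
bounded, map on the compact torus, so the minorant is `μ`-integrable, and closedness of `μ`
makes its integral `-ε`. Letting `ε → 0` gives the claim. -/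

section Torus

variable {d : ℕ}

lemma projT_surjective : Function.Surjective (projT (d := d)) := fun y =>
  ⟨WithLp.toLp 2 fun i => (y i).out, funext fun i => QuotientAddGroup.out_eq' (y i)⟩

lemma isOpenQuotientMap_projT : IsOpenQuotientMap (projT (d := d)) :=
  (IsOpenQuotientMap.piMap fun _ => QuotientAddGroup.isOpenQuotientMap_mk).comp
    (PiLp.homeomorph 2 _).isOpenQuotientMap

lemma exists_intVec_of_projT_eq {x y : Ed d} (h : projT x = projT y) :
    ∃ k : Fin d → ℤ, x = y + intVec k := by
  have hcoord : ∀ i, ∃ n : ℤ, x i = y i + n := by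
    intro i
    have hi : ((x i - y i : ℝ) : AddCircle (1 : ℝ)) = 0 := by
      have hxy : (x i : AddCircle (1 : ℝ)) = y i := congrFun h i
      rw [QuotientAddGroup.mk_sub, hxy, sub_self]
    obtain ⟨n, hn⟩ := (AddCircle.coe_eq_zero_iff 1).1 hi
    exact ⟨n, by simp only [zsmul_eq_mul, mul_one] at hn; linarith⟩
  choose k hk using hcoord
  exact ⟨k, PiLp.ext fun i => by simpa [intVec] using hk i⟩

lemma exists_continuous_comp_projT_eq {E : Type*} [TopologicalSpace E] {f : Ed d → E}
    (hf : Continuous f) (hper : ∀ (x : Ed d) (k : Fin d → ℤ), f (x + intVec k) = f x) :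
    ∃ g : Td d → E, Continuous g ∧ ∀ x, g (projT x) = f x := by
  obtain ⟨s, hs⟩ := projT_surjective.hasRightInverse (f := projT (d := d))
  have hgf : ∀ x, f (s (projT x)) = f x := fun x => by
    obtain ⟨k, hk⟩ := exists_intVec_of_projT_eq (hs (projT x))
    rw [hk, hper]
  refine ⟨f ∘ s, ?_, hgf⟩
  rw [← isOpenQuotientMap_projT.continuous_comp_iff]
  exact hf.congr fun x => (hgf x).symm

lemma fderiv_add_intVec {φ : Ed d → ℝ} (hφ : ZPeriodic φ) (x : Ed d)
    (k : Fin d → ℤ) : fderiv ℝ φ (x + intVec k) = fderiv ℝ φ x := by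
  rw [← fderiv_comp_add_right, show (fun y => φ (y + intVec k)) = φ from funext (hφ · k)]

end Torus

lemma fderiv_apply_le_of_isLUB {d : ℕ} {H : Ed d → Ed d → ℝ} {x v : Ed d} {ℓ : ℝ}
    (hℓ : IsLUB (Set.range fun p : Ed d => rinner p v - H x p) ℓ) (φ : Ed d → ℝ) :
    fderiv ℝ φ x v ≤ ℓ + H x (gradient φ x) := by
  have hfenchel := hℓ.1 ⟨gradient φ x, rfl⟩
  have hgrad : rinner (gradient φ x) v = fderiv ℝ φ x v := InnerProductSpace.toDual_symm_apply
  simp only [hgrad] at hfenchel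
  linarith

lemma integrable_clm_apply_of_integrable_norm {X E : Type*} [TopologicalSpace X] [CompactSpace X]
    [MeasurableSpace X] [OpensMeasurableSpace X] [NormedAddCommGroup E] [NormedSpace ℝ E]
    [MeasurableSpace E] [BorelSpace E] [SecondCountableTopology E] {μ : Measure (X × E)}
    (hv : Integrable (fun p => ‖p.2‖) μ) {G : X → E →L[ℝ] ℝ} (hG : Continuous G) :
    Integrable (fun p => G p.1 p.2) μ := by
  obtain ⟨C, hC⟩ := isCompact_univ.exists_bound_of_continuousOn hG.continuousOn
  have hcont : Continuous fun p : X × E => G p.1 p.2 :=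
    isBoundedBilinearMap_apply.continuous.comp ((hG.comp continuous_fst).prodMk continuous_snd)
  refine (hv.const_mul C).mono' hcont.aestronglyMeasurable (ae_of_all _ fun p => ?_)
  calc ‖G p.1 p.2‖ ≤ ‖G p.1‖ * ‖p.2‖ := (G p.1).le_opNorm p.2
    _ ≤ C * ‖p.2‖ := by gcongr; exact hC _ (mem_univ _)

lemma integral_nonneg_of_forall_integrable_minorant {α : Type*} [MeasurableSpace α]
    {μ : Measure α} {g : α → ℝ}
    (h : ∀ ε > 0, ∃ f : α → ℝ, Integrable f μ ∧ -ε ≤ ∫ a, f a ∂μ ∧ ∀ a, f a ≤ g a) :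
    0 ≤ ∫ a, g a ∂μ := by
  by_cases hg : Integrable g μ
  · refine le_of_forall_pos_le_add fun ε hε => ?_
    obtain ⟨f, hf, hfε, hfg⟩ := h ε hε
    linarith [integral_mono hf hg hfg]
  · -- a non-integrable `g` has Bochner integral `0`
    rw [integral_undef hg]

theorem stmt16_general (d : ℕ) (lam : ℝ)
    (H : Ed d → Ed d → ℝ)
    (L : Ed d → Ed d → ℝ)
    (hL : ∀ x v : Ed d, IsLUB (Set.range fun p : Ed d => rinner p v - H x p) (L x v))
    (u : Ed d → ℝ)
    (happrox : ∀ ε : ℝ, 0 < ε → ∃ uε : Ed d → ℝ, ContDiff ℝ (⊤ : ℕ∞) uε ∧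
      ZPeriodic uε ∧ (∀ x : Ed d, |u x - uε x| ≤ ε) ∧
      ∀ x : Ed d, lam * u x + H x (gradient uε x) ≤ ε)
    (Lb : Td d → Ed d → ℝ) (ub : Td d → ℝ)
    (hLb : ∀ (x v : Ed d), Lb (projT x) v = L x v)
    (hub : ∀ x : Ed d, ub (projT x) = u x)
    (μ : Measure (Td d × Ed d)) (hμ : IsProbabilityMeasure μ)
    (hclosed : ClosedMeasure μ) :
    0 ≤ ∫ p, (Lb p.1 p.2 - lam * ub p.1) ∂μ := by
  refine integral_nonneg_of_forall_integrable_minorant fun ε hε => ?_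
  obtain ⟨uε, hsmooth, hper, -, hsub⟩ := happrox ε hε
  have hC1 : ContDiff ℝ 1 uε := hsmooth.of_le (by exact_mod_cast le_top)
  obtain ⟨G, hGc, hG⟩ := exists_continuous_comp_projT_eq (hC1.continuous_fderiv one_ne_zero)
    (fderiv_add_intVec hper)
  have hIG := integrable_clm_apply_of_integrable_norm hclosed.1 hGc
  refine ⟨fun p => G p.1 p.2 - ε, hIG.sub (integrable_const ε), ?_, ?_⟩
  · simp [integral_sub hIG (integrable_const ε), hclosed.2 uε hC1 hper G hG]
  · rintro ⟨y, v⟩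
    obtain ⟨x, rfl⟩ := projT_surjective y
    have hfenchel := fderiv_apply_le_of_isLUB (hL x v) uε
    simp only [hG, hLb, hub]
    linarith [hsub x]

/-- If `u` admits smooth periodic approximations that are `ε`-subsolutions of the
discounted Hamilton–Jacobi equation, then `∫ (L - λu) dμ ≥ 0` for every closed
probability measure `μ`. Here `L` is the Legendre transform of `H`. -/
theorem stmt16 (d : ℕ) (hd : 1 ≤ d) (lam : ℝ) (hlam : 0 < lam)
    (H : Ed d → Ed d → ℝ) (hHc : Continuous fun p : Ed d × Ed d => H p.1 p.2)
    (hHper : ZPeriodic1 H)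
    (L : Ed d → Ed d → ℝ)
    (hL : ∀ x v : Ed d, IsLUB (Set.range fun p : Ed d => rinner p v - H x p) (L x v))
    (u : Ed d → ℝ) (huc : Continuous u) (huper : ZPeriodic u)
    (happrox : ∀ ε : ℝ, 0 < ε → ∃ uε : Ed d → ℝ, ContDiff ℝ (⊤ : ℕ∞) uε ∧
      ZPeriodic uε ∧ (∀ x : Ed d, |u x - uε x| ≤ ε) ∧
      ∀ x : Ed d, lam * u x + H x (gradient uε x) ≤ ε)
    (Lb : Td d → Ed d → ℝ) (ub : Td d → ℝ)
    (hLb : ∀ (x v : Ed d), Lb (projT x) v = L x v)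
    (hub : ∀ x : Ed d, ub (projT x) = u x)
    (μ : Measure (Td d × Ed d)) (hμ : IsProbabilityMeasure μ)
    (hclosed : ClosedMeasure μ)
    (hint : Integrable (fun p : Td d × Ed d => Lb p.1 p.2) μ) :
    0 ≤ ∫ p, (Lb p.1 p.2 - lam * ub p.1) ∂μ :=
  stmt16_general d lam H L hL u happrox Lb ub hLb hub μ hμ hclosed
end
end

section
/- Let d ≥ 1, let L : ℝ^d × ℝ^d → ℝ be C², ℤ^d-periodic in its first variable, with ∂²L/∂v²(x,v) positive definite for every (x,v), and let F∞, D > 0. Then there exists a constant C > 0 such that for all τ ∈ (0,1), λ ∈ (0,1], every C¹ ℤ^d-periodic f : ℝ^d → ℝ with ‖f‖∞ ≤ F∞ and ‖Df‖∞ ≤ F∞, and all points x₋₁, x₀, x₁ ∈ ℝ^d with |x₀ − x₋₁| ≤ τD, |x₁ − x₀| ≤ τD such that x₀ minimizes the function z ↦ (1−τλ) 𝓛_{τ,f}(x₋₁, z) + 𝓛_{τ,f}(z, x₁) over ℝ^d, the discrete velocities v₋₁ := (x₀ − x₋₁)/τ and v₀ := (x₁ − x₀)/τ satisfy |v₀ −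 v₋₁| ≤ C τ. -/
open MeasureTheory Set Filter

noncomputable section

/-!
Write `Ψ = D(x,v)L`, so that `∂ᵥL(x,v) h = Ψ (x,v) (0,h)` and `∂ₓL(x,v) h = Ψ (x,v) (h,0)`.
At the minimizer `x₀` the Euler–Lagrange equation reads
`(1-τλ) ∂ᵥL(x₋₁,v₋₁) + τ (∂ₓL(x₀,v₀) + Df(x₀)) = ∂ᵥL(x₀,v₀)`. Hence
`∂ᵥL(x₀,v₀) - ∂ᵥL(x₀,v₋₁)` is `O(τ)`: apart from terms carrying a factor `τ`, it contains only
`∂ᵥL(x₋₁,v₋₁) - ∂ᵥL(x₀,v₋₁)`, a difference over a step `|x₀ - x₋₁| ≤ τD`. Uniform convexity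
of `L` in `v` bounds `m |v₀ - v₋₁|²` by this quantity tested against `v₀ - v₋₁`.
The constants are extrema over a compact set of positions and velocities, which suffices because,
`L` and `f` being periodic, the whole configuration may be translated so that `|x₀| ≤ √d`.
-/

open ContinuousLinearMap

section Calculus

variable {E F : Type*} [NormedAddCommGroup E] [NormedSpace ℝ E]

theorem IsCompact.exists_pos_mul_sq_norm_le [ProperSpace E] {X : Type*} [TopologicalSpace X]
    {K : Set X} (hK : IsCompact K) {Q : X → E →L[ℝ] E →L[ℝ] ℝ} (hQ : ContinuousOn Q K)
    (hpos : ∀ p ∈ K, ∀ h ≠ 0, 0 < Q p h h) :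
    ∃ m > 0, ∀ p ∈ K, ∀ w, m * ‖w‖ ^ 2 ≤ Q p w w := by
  have hS : IsCompact (K ×ˢ Metric.sphere (0 : E) 1) := hK.prod (isCompact_sphere 0 1)
  have hcont : ContinuousOn (fun q : X × E => Q q.1 q.2 q.2) (K ×ˢ Metric.sphere 0 1) :=
    ((hQ.comp continuous_fst.continuousOn fun q hq => hq.1).clm_apply
      continuous_snd.continuousOn).clm_apply continuous_snd.continuousOn
  obtain ⟨m, hm, hmS⟩ := hS.exists_forall_le' hcont fun q hq =>
    hpos q.1 hq.1 q.2 (ne_zero_of_mem_unit_sphere ⟨q.2, hq.2⟩)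
  refine ⟨m, hm, fun p hp w => ?_⟩
  rcases eq_or_ne w 0 with rfl | hw
  · simp
  have hw' : ‖w‖ ≠ 0 := norm_ne_zero_iff.2 hw
  have hunit := hmS (p, ‖w‖⁻¹ • w) ⟨hp, by simp [norm_smul, hw']⟩
  have hscale : Q p w w = ‖w‖ ^ 2 * Q p (‖w‖⁻¹ • w) (‖w‖⁻¹ • w) := by
    simp only [map_smul, smul_apply, smul_eq_mul]
    field_simp
  rw [hscale, mul_comm]
  exact mul_le_mul_of_nonneg_left hunit (sq_nonneg _)

theorem Convex.le_sub_apply_of_le_fderiv_apply {X : Type*} [NormedAddCommGroup X]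
    [NormedSpace ℝ X] {s : Set X} (hs : Convex ℝ s) {Ψ : X → X →L[ℝ] ℝ}
    {Ψ' : X → X →L[ℝ] X →L[ℝ] ℝ} (hΨ : ∀ r ∈ s, HasFDerivAt Ψ (Ψ' r) r) {p q : X}
    (hp : p ∈ s) (hq : q ∈ s) {c : ℝ} (hc : ∀ r ∈ s, c ≤ Ψ' r (q - p) (q - p)) :
    c ≤ Ψ q (q - p) - Ψ p (q - p) := by
  have hseg : ∀ t ∈ Icc (0 : ℝ) 1, p + t • (q - p) ∈ s := fun t ht => hs.add_smul_sub_mem hp hq ht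
  have hderiv : ∀ t ∈ Icc (0 : ℝ) 1, HasDerivAt (fun t : ℝ => Ψ (p + t • (q - p)) (q - p))
      (Ψ' (p + t • (q - p)) (q - p) (q - p)) t := by
    intro t ht
    have hline : HasDerivAt (fun t : ℝ => p + t • (q - p)) (q - p) t := by
      simpa using ((hasDerivAt_id t).smul_const (q - p)).const_add p
    have hcomp : HasDerivAt (fun t : ℝ => Ψ (p + t • (q - p))) (Ψ' (p + t • (q - p)) (q - p)) t :=
      (hΨ (p + t • (q - p)) (hseg t ht)).comp_hasDerivAt t hline
    have h := hcomp.clm_apply (hasDerivAt_const t (q - p))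
    rwa [ContinuousLinearMap.map_zero, add_zero] at h
  obtain ⟨t, ht, hslope⟩ := exists_hasDerivAt_eq_slope _ _ one_pos
    (fun t ht => (hderiv t ht).continuousAt.continuousWithinAt)
    (fun t ht => hderiv t (Ioo_subset_Icc_self ht))
  have hct := hc _ (hseg t (Ioo_subset_Icc_self ht))
  rwa [hslope, one_smul, zero_smul, add_zero, add_sub_cancel, sub_zero, div_one] at hct

theorem iteratedFDeriv_two_apply_eq_fderiv_fderiv_uncurry [NormedAddCommGroup F]
    [NormedSpace ℝ F] {L : E → F → ℝ} (hL : ContDiff ℝ 2 fun p : E × F => L p.1 p.2)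
    (x : E) (v h h' : F) :
    iteratedFDeriv ℝ 2 (fun w => L x w) v ![h, h'] =
      fderiv ℝ (fderiv ℝ fun p : E × F => L p.1 p.2) (x, v) (0, h) (0, h') := by
  set Ψ := fderiv ℝ fun p : E × F => L p.1 p.2
  have hΨ : ContDiff ℝ 1 Ψ := hL.fderiv_right le_rfl
  have hfderiv : fderiv ℝ (fun w => L x w) = fun w => (Ψ (x, w)).comp (inr ℝ E F) :=
    funext fun w => ((((hL.differentiable two_ne_zero) (x, w)).hasFDerivAt).comp w
      (hasFDerivAt_prodMk_right x w)).fderiv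
  have hsecond := ((((hΨ.differentiable one_ne_zero) (x, v)).hasFDerivAt).comp v
      (hasFDerivAt_prodMk_right x v)).clm_comp (hasFDerivAt_const (inr ℝ E F) v)
  simp only [Function.comp_def] at hsecond
  rw [iteratedFDeriv_two_apply, hfderiv, hsecond.fderiv]
  simp

theorem IsCompact.exists_pos_mul_sq_norm_le_fderiv_fderiv [NormedAddCommGroup F]
    [NormedSpace ℝ F] [ProperSpace F] {L : E → F → ℝ}
    (hL : ContDiff ℝ 2 fun p : E × F => L p.1 p.2) {K : Set (E × F)} (hK : IsCompact K)
    (hconv : ∀ r ∈ K, ∀ h ≠ 0, 0 < iteratedFDeriv ℝ 2 (fun w => L r.1 w) r.2 ![h, h]) :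
    ∃ m > 0, ∀ r ∈ K, ∀ w,
      m * ‖w‖ ^ 2 ≤ fderiv ℝ (fderiv ℝ fun p : E × F => L p.1 p.2) r (0, w) (0, w) := by
  have hcont : Continuous (fderiv ℝ (fderiv ℝ fun p : E × F => L p.1 p.2)) :=
    (hL.fderiv_right le_rfl).continuous_fderiv one_ne_zero
  simpa using hK.exists_pos_mul_sq_norm_le
    (Q := fun r => ((compL ℝ F (E × F) ℝ).flip (inr ℝ E F)).comp
      ((fderiv ℝ (fderiv ℝ fun p : E × F => L p.1 p.2) r).comp (inr ℝ E F)))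
    (by fun_prop) fun r hr h hh => by
      simpa [iteratedFDeriv_two_apply_eq_fderiv_fderiv_uncurry hL] using hconv r hr h hh

theorem norm_inv_smul_le_of_norm_le_mul {τ D : ℝ} (hτ : 0 < τ) {u : E} (hu : ‖u‖ ≤ τ * D) :
    ‖τ⁻¹ • u‖ ≤ D := by
  rw [norm_smul, norm_inv, Real.norm_of_nonneg hτ.le, inv_mul_le_iff₀ hτ]
  exact hu

theorem apply_sub_apply_le_of_eulerLagrange {Ψ : E × E → E × E →L[ℝ] ℝ} {xm x vm v : E}
    {f' : E →L[ℝ] ℝ} {τ μ M₁ M₂ F : ℝ} (hμ : 0 ≤ μ) (hμτ : μ ≤ τ)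
    (hM₁m : ‖Ψ (xm, vm)‖ ≤ M₁) (hM₁ : ‖Ψ (x, v)‖ ≤ M₁)
    (hM₂ : ‖Ψ (xm, vm) - Ψ (x, vm)‖ ≤ M₂ * ‖x - xm‖) (hf' : ‖f'‖ ≤ F)
    (hEL : ∀ h, (1 - μ) * Ψ (xm, vm) (0, h) + τ * (Ψ (x, v) (h, 0) + f' h) = Ψ (x, v) (0, h))
    (h : E) :
    Ψ (x, v) (0, h) - Ψ (x, vm) (0, h) ≤ (M₂ * ‖x - xm‖ + τ * (2 * M₁ + F)) * ‖h‖ := by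
  have hshift := (Ψ (xm, vm) - Ψ (x, vm)).le_of_opNorm_le hM₂ (0, h)
  have hvel := (Ψ (xm, vm)).le_of_opNorm_le hM₁m (0, h)
  have hpos := (Ψ (x, v)).le_of_opNorm_le hM₁ (h, 0)
  have hf'h := f'.le_of_opNorm_le hf' h
  simp only [Prod.norm_mk, norm_zero, max_eq_left, max_eq_right, norm_nonneg, Real.norm_eq_abs,
    sub_apply] at hshift hvel hpos hf'h
  have hτ : 0 ≤ τ := hμ.trans hμτ
  rw [← hEL h]
  nlinarith [abs_le.1 hshift, abs_le.1 hvel, abs_le.1 hpos, abs_le.1 hf'h, abs_nonneg (Ψ (xm, vm) (0, h)),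
    mul_nonneg hμ (sub_nonneg.2 (neg_le_abs (Ψ (xm, vm) (0, h)))),
    mul_nonneg (sub_nonneg.2 hμτ) (abs_nonneg (Ψ (xm, vm) (0, h)))]

theorem norm_sub_le_of_eulerLagrange {Ψ : E × E → E × E →L[ℝ] ℝ}
    {Ψ' : E × E → E × E →L[ℝ] E × E →L[ℝ] ℝ} {B : Set (E × E)} (hB : Convex ℝ B)
    (hΨ : ∀ r ∈ B, HasFDerivAt Ψ (Ψ' r) r) {M₁ M₂ m F D τ μ : ℝ}
    (hM₁ : ∀ r ∈ B, ‖Ψ r‖ ≤ M₁) (hM₂ : ∀ r ∈ B, ‖Ψ' r‖ ≤ M₂) (hm : 0 < m)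
    (hmB : ∀ r ∈ B, ∀ w, m * ‖w‖ ^ 2 ≤ Ψ' r (0, w) (0, w)) (hK : 0 ≤ M₂ * D + 2 * M₁ + F)
    {xm x vm v : E} (hmm : (xm, vm) ∈ B) (hm0 : (x, vm) ∈ B) (h00 : (x, v) ∈ B)
    (hx : ‖x - xm‖ ≤ τ * D) (hμ : 0 ≤ μ) (hμτ : μ ≤ τ) {f' : E →L[ℝ] ℝ} (hf' : ‖f'‖ ≤ F)
    (hEL : ∀ h, (1 - μ) * Ψ (xm, vm) (0, h) + τ * (Ψ (x, v) (h, 0) + f' h) = Ψ (x, v) (0, h)) :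
    ‖v - vm‖ ≤ (M₂ * D + 2 * M₁ + F) / m * τ := by
  have hτ : 0 ≤ τ := hμ.trans hμτ
  have hM₂_nonneg : 0 ≤ M₂ := (norm_nonneg (Ψ' (xm, vm))).trans (hM₂ _ hmm)
  have hlow : m * ‖v - vm‖ ^ 2 ≤ Ψ (x, v) (0, v - vm) - Ψ (x, vm) (0, v - vm) := by
    simpa using hB.le_sub_apply_of_le_fderiv_apply hΨ hm0 h00 fun r hr => by
      simpa using hmB r hr (v - vm)
  have hLip : ‖Ψ (xm, vm) - Ψ (x, vm)‖ ≤ M₂ * ‖x - xm‖ := by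
    simpa [norm_sub_rev] using hB.norm_image_sub_le_of_norm_hasFDerivWithin_le
      (fun r hr => (hΨ r hr).hasFDerivWithinAt) hM₂ hm0 hmm
  have hup := apply_sub_apply_le_of_eulerLagrange hμ hμτ (hM₁ _ hmm) (hM₁ _ h00) hLip hf' hEL (v - vm)
  have key : m * ‖v - vm‖ * ‖v - vm‖ ≤ (M₂ * D + 2 * M₁ + F) * τ * ‖v - vm‖ := by
    rw [mul_assoc, ← sq]
    refine hlow.trans (hup.trans ?_)
    gcongr
    nlinarith [mul_le_mul_of_nonneg_left hx hM₂_nonneg]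
  rw [div_mul_eq_mul_div, le_div_iff₀ hm, mul_comm]
  rcases (norm_nonneg (v - vm)).eq_or_lt with hzero | hpos
  · rw [← hzero, mul_zero]
    positivity
  · exact le_of_mul_le_mul_right key hpos

end Calculus

section DiscreteAction

variable {d : ℕ} {L : Ed d → Ed d → ℝ} {f : Ed d → ℝ} {τ : ℝ}

theorem exists_norm_add_intVec_le_sqrt (x : Ed d) : ∃ k : Fin d → ℤ, ‖x + intVec k‖ ≤ √d := by
  refine ⟨fun i => -⌊x i⌋, ?_⟩
  have hfract : ∀ i, (x + intVec fun i => -⌊x i⌋) i = Int.fract (x i) := fun i => by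
    simp [intVec, Int.fract, sub_eq_add_neg]
  rw [EuclideanSpace.norm_eq]
  refine Real.sqrt_le_sqrt ?_
  calc ∑ i, ‖(x + intVec fun i => -⌊x i⌋) i‖ ^ 2 ≤ ∑ _i : Fin d, (1 : ℝ) := by
        refine Finset.sum_le_sum fun i _ => ?_
        rw [hfract, Real.norm_of_nonneg (Int.fract_nonneg _)]
        exact pow_le_one₀ (Int.fract_nonneg _) (Int.fract_lt_one _).le
    _ = d := by simp

theorem dAct_add_intVec (hL : ZPeriodic1 L) (hf : ZPeriodic f) (x y : Ed d) (k : Fin d → ℤ) :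
    dAct L f τ (x + intVec k) (y + intVec k) = dAct L f τ x y := by
  rw [dAct, dAct, add_sub_add_right_eq_sub, hL, hf]

theorem dAct_isMin_add_intVec {a : ℝ} (hL : ZPeriodic1 L) (hf : ZPeriodic f) {xm x y : Ed d}
    (hmin : ∀ z, a * dAct L f τ xm x + dAct L f τ x y ≤ a * dAct L f τ xm z + dAct L f τ z y)
    (k : Fin d → ℤ) (z : Ed d) :
    a * dAct L f τ (xm + intVec k) (x + intVec k) + dAct L f τ (x + intVec k) (y + intVec k) ≤
      a * dAct L f τ (xm + intVec k) z + dAct L f τ z (y + intVec k) := by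
  obtain ⟨z, rfl⟩ : ∃ z', z = z' + intVec k := ⟨z - intVec k, by abel⟩
  simpa only [dAct_add_intVec hL hf] using hmin z

theorem hasFDerivAt_dAct_right (hτ : τ ≠ 0) {x y : Ed d} {Λ : Ed d × Ed d →L[ℝ] ℝ}
    (hL : HasFDerivAt (fun p : Ed d × Ed d => L p.1 p.2) Λ (x, τ⁻¹ • (y - x))) :
    HasFDerivAt (dAct L f τ x) (Λ.comp (inr ℝ (Ed d) (Ed d))) y := by
  have hpath : HasFDerivAt (fun z => (x, τ⁻¹ • (z - x)))
      ((inr ℝ (Ed d) (Ed d)).comp (τ⁻¹ • ContinuousLinearMap.id ℝ (Ed d))) y :=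
    (hasFDerivAt_prodMk_right x _).comp y (((hasFDerivAt_id y).sub_const x).const_smul τ⁻¹)
  refine (((hL.comp y hpath).add_const (f x)).const_mul τ).congr_fderiv ?_
  ext h
  simp [smul_smul, hτ]

theorem hasFDerivAt_dAct_left (hτ : τ ≠ 0) {x y : Ed d} {Λ : Ed d × Ed d →L[ℝ] ℝ}
    {f' : Ed d →L[ℝ] ℝ} (hL : HasFDerivAt (fun p : Ed d × Ed d => L p.1 p.2) Λ (x, τ⁻¹ • (y - x)))
    (hf : HasFDerivAt f f' x) :
    HasFDerivAt (fun z => dAct L f τ z y)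
      (τ • (Λ.comp (inl ℝ (Ed d) (Ed d)) + f') - Λ.comp (inr ℝ (Ed d) (Ed d))) x := by
  have hpath : HasFDerivAt (fun z => (z, τ⁻¹ • (y - z)))
      ((ContinuousLinearMap.id ℝ (Ed d)).prod (τ⁻¹ • -ContinuousLinearMap.id ℝ (Ed d))) x :=
    (hasFDerivAt_id x).prodMk (((hasFDerivAt_id x).const_sub y).const_smul τ⁻¹)
  refine (((hL.comp x hpath).add hf).const_mul τ).congr_fderiv ?_
  ext h
  have hsplit := Λ.comp_inl_add_comp_inr (h, -(τ⁻¹ • h))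
  simp only [comp_apply, inl_apply, inr_apply, map_neg, map_smul, smul_eq_mul] at hsplit
  simp [← hsplit]
  field_simp
  ring

theorem dAct_eulerLagrange {Ψ : Ed d × Ed d → Ed d × Ed d →L[ℝ] ℝ}
    (hΨ : ∀ p, HasFDerivAt (fun p : Ed d × Ed d => L p.1 p.2) (Ψ p) p) {f' : Ed d →L[ℝ] ℝ}
    {xm x y : Ed d} (hf : HasFDerivAt f f' x) (hτ : τ ≠ 0) {a : ℝ}
    (hmin : ∀ z, a * dAct L f τ xm x + dAct L f τ x y ≤ a * dAct L f τ xm z + dAct L f τ z y)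
    (h : Ed d) :
    a * Ψ (xm, τ⁻¹ • (x - xm)) (0, h) + τ * (Ψ (x, τ⁻¹ • (y - x)) (h, 0) + f' h) =
      Ψ (x, τ⁻¹ • (y - x)) (0, h) := by
  have hderiv := ((hasFDerivAt_dAct_right (f := f) hτ (hΨ (xm, τ⁻¹ • (x - xm)))).const_mul a).add
    (hasFDerivAt_dAct_left hτ (hΨ (x, τ⁻¹ • (y - x))) hf)
  have hloc : IsLocalMin (fun z => a * dAct L f τ xm z + dAct L f τ z y) x :=
    Filter.Eventually.of_forall hmin
  have hzero := congrArg (· h) (hloc.hasFDerivAt_eq_zero hderiv)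
  simp only [add_apply, smul_apply, sub_apply, comp_apply, inl_apply, inr_apply, smul_eq_mul,
    zero_apply] at hzero
  linarith

end DiscreteAction

theorem stmt17_general (d : ℕ)
    (L : Ed d → Ed d → ℝ) (hL2 : ContDiff ℝ 2 fun p : Ed d × Ed d => L p.1 p.2)
    (hLper : ZPeriodic1 L)
    (hLconv : ∀ (x v h : Ed d), h ≠ 0 →
      0 < (iteratedFDeriv ℝ 2 (fun w => L x w) v) ![h, h])
    (Finf D : ℝ) (hFinf : 0 < Finf) (hD : 0 < D) :
    ∃ C : ℝ, 0 < C ∧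
      ∀ τ lam : ℝ, τ ∈ Set.Ioo (0:ℝ) 1 → lam ∈ Set.Ioc (0:ℝ) 1 →
        ∀ f : Ed d → ℝ, ContDiff ℝ 1 f → ZPeriodic f →
          (∀ x, |f x| ≤ Finf) → (∀ x : Ed d, ‖fderiv ℝ f x‖ ≤ Finf) →
          ∀ xm1 x0 x1 : Ed d, ‖x0 - xm1‖ ≤ τ * D → ‖x1 - x0‖ ≤ τ * D →
            (∀ z : Ed d,
              (1 - τ * lam) * dAct L f τ xm1 x0 + dAct L f τ x0 x1 ≤
                (1 - τ * lam) * dAct L f τ xm1 z + dAct L f τ z x1) →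
            ‖τ⁻¹ • (x1 - x0) - τ⁻¹ • (x0 - xm1)‖ ≤ C * τ := by
  set Φ := fun p : Ed d × Ed d => L p.1 p.2
  have hΨ : ContDiff ℝ 1 (fderiv ℝ Φ) := hL2.fderiv_right le_rfl
  set B := Metric.closedBall (0 : Ed d) (√d + D) ×ˢ Metric.closedBall (0 : Ed d) D
  have hB : IsCompact B := (isCompact_closedBall _ _).prod (isCompact_closedBall _ _)
  have hmem : ∀ a b : Ed d, ‖a‖ ≤ √d + D → ‖b‖ ≤ D → (a, b) ∈ B := fun a b ha hb =>
    ⟨mem_closedBall_zero_iff.2 ha, mem_closedBall_zero_iff.2 hb⟩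
  have h0B := hmem 0 0 (norm_zero.trans_le (by positivity)) (norm_zero.trans_le hD.le)
  obtain ⟨M₁, hM₁⟩ := hB.exists_bound_of_continuousOn hΨ.continuous.continuousOn
  obtain ⟨M₂, hM₂⟩ := hB.exists_bound_of_continuousOn (hΨ.continuous_fderiv one_ne_zero).continuousOn
  obtain ⟨m, hm, hmB⟩ := hB.exists_pos_mul_sq_norm_le_fderiv_fderiv hL2 fun r _ => hLconv r.1 r.2
  have hM₁0 : 0 ≤ M₁ := (norm_nonneg (fderiv ℝ Φ 0)).trans (hM₁ _ h0B)
  have hM₂0 : 0 ≤ M₂ := (norm_nonneg (fderiv ℝ (fderiv ℝ Φ) 0)).trans (hM₂ _ h0B)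
  refine ⟨(M₂ * D + 2 * M₁ + Finf) / m, by positivity, ?_⟩
  intro τ lam ⟨hτ0, hτ1⟩ hlam f hf hfper _ hDf xm1 x0 x1 hx0 hx1 hmin
  obtain ⟨k, hk⟩ := exists_norm_add_intVec_le_sqrt x0
  have hEL := dAct_eulerLagrange (fun p => ((hL2.differentiable two_ne_zero) p).hasFDerivAt)
    ((hf.differentiable one_ne_zero) _).hasFDerivAt hτ0.ne' (dAct_isMin_add_intVec hLper hfper hmin k)
  simp only [add_sub_add_right_eq_sub] at hEL
  have hvm := norm_inv_smul_le_of_norm_le_mul hτ0 hx0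
  have hx0B : ‖x0 + intVec k‖ ≤ √d + D := by linarith
  have hxm1B : ‖xm1 + intVec k‖ ≤ √d + D := by
    calc ‖xm1 + intVec k‖ ≤ ‖x0 + intVec k‖ + ‖x0 - xm1‖ := by
          simpa [add_comm] using norm_sub_le (x0 + intVec k) (x0 - xm1)
      _ ≤ √d + D := by nlinarith
  exact norm_sub_le_of_eulerLagrange ((convex_closedBall _ _).prod (convex_closedBall _ _))
    (fun r _ => ((hΨ.differentiable one_ne_zero) r).hasFDerivAt) hM₁ hM₂ hm hmB (by positivity)
    (hmem _ _ hxm1B hvm) (hmem _ _ hx0B hvm) (hmem _ _ hx0B (norm_inv_smul_le_of_norm_le_mul hτ0 hx1))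
    (by simpa using hx0) (mul_nonneg hτ0.le hlam.1.le) (mul_le_of_le_one_right hτ0.le hlam.2)
    (hDf _) hEL

/-- Discrete velocity increment bound along interior minimizers of two
consecutive discrete actions: `|v₀ - v₋₁| ≤ Cτ`. -/
theorem stmt17 (d : ℕ) (hd : 1 ≤ d)
    (L : Ed d → Ed d → ℝ) (hL2 : ContDiff ℝ 2 fun p : Ed d × Ed d => L p.1 p.2)
    (hLper : ZPeriodic1 L)
    (hLconv : ∀ (x v h : Ed d), h ≠ 0 →
      0 < (iteratedFDeriv ℝ 2 (fun w => L x w) v) ![h, h])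
    (Finf D : ℝ) (hFinf : 0 < Finf) (hD : 0 < D) :
    ∃ C : ℝ, 0 < C ∧
      ∀ τ lam : ℝ, τ ∈ Set.Ioo (0:ℝ) 1 → lam ∈ Set.Ioc (0:ℝ) 1 →
        ∀ f : Ed d → ℝ, ContDiff ℝ 1 f → ZPeriodic f →
          (∀ x, |f x| ≤ Finf) → (∀ x : Ed d, ‖fderiv ℝ f x‖ ≤ Finf) →
          ∀ xm1 x0 x1 : Ed d, ‖x0 - xm1‖ ≤ τ * D → ‖x1 - x0‖ ≤ τ * D →
            (∀ z : Ed d,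
              (1 - τ * lam) * dAct L f τ xm1 x0 + dAct L f τ x0 x1 ≤
                (1 - τ * lam) * dAct L f τ xm1 z + dAct L f τ z x1) →
            ‖τ⁻¹ • (x1 - x0) - τ⁻¹ • (x0 - xm1)‖ ≤ C * τ :=
  stmt17_general d L hL2 hLper hLconv Finf D hFinf hD
end
end
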